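/- If g: S^M → ℝ is a bounded concave function, then the function Tg defined by (Tg)(π) = ∫_E m(dx) D(π,x) g(D₀(π,x)/D(π,x), ..., D_M(π,x)/D(π,x)) is also bounded and concave on S^M. -/

import Mathlib

/-!
The integrand of `Tg` is the perspective `v ↦ (∑ v) · g(v / ∑ v)` of `g`, evaluated at the vector
`(D₀(π,x), …, D_M(π,x))`, which is linear in `π` and nonnegative. The perspective of a concave
function is positively homogeneous and superadditive on the nonnegative orthant, hence concave
there; so the integrand is concave in `π` for every `x`, and so is its integral. For the bound,
`|perspective g v| ≤ C · ∑ v` and `∫ D(π,x) m(dx) = ∑ π = 1`.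
-/

open MeasureTheory

/-- `D_i(π,x)`. -/
noncomputable def Dcoef {E : Type*} {M : ℕ} (p : ℝ) (ν : Fin (M + 1) → ℝ)
    (f : Fin (M + 1) → E → ℝ) (π : Fin (M + 1) → ℝ) (x : E) (i : Fin (M + 1)) : ℝ :=
  if i = 0 then (1 - p) * π 0 * f 0 x else (π i + π 0 * p * ν i) * f i x

/-- `D(π,x) = Σ_{i=0}^M D_i(π,x)`. -/
noncomputable def Dtot {E : Type*} {M : ℕ} (p : ℝ) (ν : Fin (M + 1) → ℝ)
    (f : Fin (M + 1) → E → ℝ) (π : Fin (M + 1) → ℝ) (x : E) : ℝ :=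
  ∑ i : Fin (M + 1), Dcoef p ν f π x i

/-- The operator `T`:
`(Tg)(π) = ∫_E m(dx) D(π,x) g(D₀(π,x)/D(π,x), …, D_M(π,x)/D(π,x))`. -/
noncomputable def Toper {E : Type*} [MeasurableSpace E] (m : Measure E) {M : ℕ}
    (p : ℝ) (ν : Fin (M + 1) → ℝ) (f : Fin (M + 1) → E → ℝ)
    (g : (Fin (M + 1) → ℝ) → ℝ) (π : Fin (M + 1) → ℝ) : ℝ :=
  ∫ x, Dtot p ν f π x * g (fun i => Dcoef p ν f π x i / Dtot p ν f π x) ∂m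

section Perspective

variable {ι : Type*} [Fintype ι] {g : (ι → ℝ) → ℝ}

/-- `Toper m p ν f g π` is definitionally `∫ x, perspective g (Dcoef p ν f π x) ∂m`. -/
noncomputable def perspective (g : (ι → ℝ) → ℝ) (v : ι → ℝ) : ℝ :=
  (∑ i, v i) * g (fun i => v i / ∑ j, v j)

lemma div_sum_mem_stdSimplex {v : ι → ℝ} (hv : 0 ≤ v) (hs : 0 < ∑ i, v i) :
    (fun i => v i / ∑ j, v j) ∈ stdSimplex ℝ ι :=
  ⟨fun i => div_nonneg (hv i) hs.le, by rw [← Finset.sum_div, div_self hs.ne']⟩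

lemma perspective_of_sum_eq_zero (g : (ι → ℝ) → ℝ) {v : ι → ℝ} (h : ∑ i, v i = 0) :
    perspective g v = 0 := by
  rw [perspective, h, zero_mul]

lemma perspective_smul (g : (ι → ℝ) → ℝ) {c : ℝ} (hc : 0 ≤ c) (v : ι → ℝ) :
    perspective g (c • v) = c * perspective g v := by
  rcases hc.eq_or_lt with rfl | hc
  · simp [perspective]
  · simp only [perspective, Pi.smul_apply, smul_eq_mul, ← Finset.mul_sum,
      mul_div_mul_left _ _ hc.ne']
    ring

lemma perspective_add_le (hg : ConcaveOn ℝ (stdSimplex ℝ ι) g) {u w : ι → ℝ}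
    (hu : 0 ≤ u) (hw : 0 ≤ w) :
    perspective g u + perspective g w ≤ perspective g (u + w) := by
  rcases (Finset.sum_nonneg fun i _ => hu i).eq_or_lt with hs | hs
  · obtain rfl : u = 0 := (Fintype.sum_eq_zero_iff_of_nonneg hu).1 hs.symm
    simp [perspective]
  rcases (Finset.sum_nonneg fun i _ => hw i).eq_or_lt with ht | ht
  · obtain rfl : w = 0 := (Fintype.sum_eq_zero_iff_of_nonneg hw).1 ht.symm
    simp [perspective]
  have hsum : ∑ i, (u + w) i = ∑ i, u i + ∑ i, w i := Finset.sum_add_distrib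
  have hst := add_pos hs ht
  have hconc := hg.2 (div_sum_mem_stdSimplex hu hs) (div_sum_mem_stdSimplex hw ht)
    (div_nonneg hs.le hst.le) (div_nonneg ht.le hst.le) (by field_simp)
  simp only [perspective, hsum]
  set s := ∑ i, u i
  set t := ∑ i, w i
  -- the normalisation of `u + w` is the convex combination of those of `u` and `w`
  -- with weights proportional to their masses
  have hmix : (fun i => (u + w) i / (s + t)) =
      (s / (s + t)) • (fun i => u i / s) + (t / (s + t)) • (fun i => w i / t) := by
    funext i
    simp only [Pi.add_apply, Pi.smul_apply, smul_eq_mul]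
    field_simp
  rw [hmix]
  refine le_of_eq_of_le ?_ (mul_le_mul_of_nonneg_left hconc hst.le)
  simp only [smul_eq_mul]
  field_simp

theorem ConcaveOn.perspective (hg : ConcaveOn ℝ (stdSimplex ℝ ι) g) :
    ConcaveOn ℝ (Set.Ici 0) (perspective g) := by
  refine ⟨convex_Ici 0, fun y hy z hz a b ha hb _ => ?_⟩
  rw [smul_eq_mul, smul_eq_mul, ← perspective_smul g ha, ← perspective_smul g hb]
  exact perspective_add_le hg (smul_nonneg ha hy) (smul_nonneg hb hz)

lemma abs_perspective_le {C : ℝ} (hC : ∀ v ∈ stdSimplex ℝ ι, |g v| ≤ C) {v : ι → ℝ}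
    (hv : 0 ≤ v) : |perspective g v| ≤ C * ∑ i, v i := by
  rcases (Finset.sum_nonneg fun i _ => hv i : 0 ≤ ∑ i, v i).eq_or_lt with hs | hs
  · rw [perspective_of_sum_eq_zero g hs.symm, ← hs]; simp
  · rw [perspective, abs_mul, abs_of_pos hs, mul_comm C]
    exact mul_le_mul_of_nonneg_left (hC _ (div_sum_mem_stdSimplex hv hs)) hs.le

lemma Measurable.perspective (hg : Measurable g) : Measurable (perspective g) := by
  unfold _root_.perspective
  fun_prop

end Perspective

theorem concaveOn_integral {α β : Type*} [MeasurableSpace α] {μ : Measure α} [AddCommGroup β]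
    [Module ℝ β] {s : Set β} {F : β → α → ℝ} (hs : Convex ℝ s)
    (hF : ∀ᵐ x ∂μ, ConcaveOn ℝ s (F · x)) (hint : ∀ b ∈ s, Integrable (F b) μ) :
    ConcaveOn ℝ s fun b => ∫ x, F b x ∂μ := by
  refine ⟨hs, fun y hy z hz a b ha hb hab => ?_⟩
  have hy' := (hint y hy).const_mul a
  have hz' := (hint z hz).const_mul b
  simp only [smul_eq_mul]
  rw [← integral_const_mul, ← integral_const_mul, ← integral_add hy' hz']
  exact integral_mono_ae (hy'.add hz') (hint _ (hs hy hz ha hb hab))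
    (hF.mono fun x hx => hx.2 hy hz ha hb hab)

section Dcoef

variable {E : Type*} {M : ℕ} {p : ℝ} {ν : Fin (M + 1) → ℝ} {f : Fin (M + 1) → E → ℝ}

/-- The prior on the regimes after one step of the chain: from regime `0` a change occurs with
probability `p`, into regime `i` with probability `ν i`. -/
noncomputable def predictedPrior (p : ℝ) (ν π : Fin (M + 1) → ℝ) : Fin (M + 1) → ℝ :=
  fun i => if i = 0 then (1 - p) * π 0 else π i + π 0 * p * ν i

lemma Dcoef_eq_predictedPrior_mul (p : ℝ) (ν : Fin (M + 1) → ℝ) (f : Fin (M + 1) → E → ℝ)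
    (π : Fin (M + 1) → ℝ) (x : E) :
    Dcoef p ν f π x = fun i => predictedPrior p ν π i * f i x := by
  funext i
  unfold Dcoef predictedPrior
  split_ifs with h
  · subst h; rfl
  · rfl

lemma predictedPrior_nonneg (hp0 : 0 ≤ p) (hp1 : p ≤ 1) (hν : ∀ i ≠ 0, 0 ≤ ν i)
    {π : Fin (M + 1) → ℝ} (hπ : 0 ≤ π) : 0 ≤ predictedPrior p ν π := by
  intro i
  unfold predictedPrior
  split_ifs with h
  · exact mul_nonneg (sub_nonneg.2 hp1) (hπ 0)
  · exact add_nonneg (hπ i) (mul_nonneg (mul_nonneg (hπ 0) hp0) (hν i h))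

lemma sum_predictedPrior (hν0 : ν 0 = 0) (hνsum : ∑ i, ν i = 1) (π : Fin (M + 1) → ℝ) :
    ∑ i, predictedPrior p ν π i = ∑ i, π i := by
  rw [Fin.sum_univ_succ, hν0, zero_add] at hνsum
  simp only [predictedPrior, Fin.sum_univ_succ, if_pos, Fin.succ_ne_zero, if_false,
    Finset.sum_add_distrib, ← Finset.mul_sum, hνsum]
  ring

lemma Dcoef_nonneg (hp0 : 0 ≤ p) (hp1 : p ≤ 1) (hν : ∀ i ≠ 0, 0 ≤ ν i)
    (hf : ∀ i x, 0 ≤ f i x) {π : Fin (M + 1) → ℝ} (hπ : 0 ≤ π) (x : E) :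
    0 ≤ Dcoef p ν f π x := by
  rw [Dcoef_eq_predictedPrior_mul]
  exact fun i => mul_nonneg (predictedPrior_nonneg hp0 hp1 hν hπ i) (hf i x)

variable (p ν f) in
noncomputable def DcoefLin (x : E) : (Fin (M + 1) → ℝ) →ₗ[ℝ] (Fin (M + 1) → ℝ) where
  toFun π := Dcoef p ν f π x
  map_add' y z := by
    funext i
    simp only [Dcoef, Pi.add_apply]
    split_ifs <;> ring
  map_smul' c y := by
    funext i
    simp only [Dcoef, Pi.smul_apply, smul_eq_mul, RingHom.id_apply]
    split_ifs <;> ring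

lemma integrable_Dtot [MeasurableSpace E] {m : Measure E} (hf : ∀ i, Integrable (f i) m)
    (π : Fin (M + 1) → ℝ) : Integrable (Dtot p ν f π) m := by
  unfold Dtot
  simp only [Dcoef_eq_predictedPrior_mul]
  exact integrable_finsetSum _ fun i _ => (hf i).const_mul _

lemma integral_Dtot [MeasurableSpace E] {m : Measure E} (hf : ∀ i, Integrable (f i) m)
    (hf1 : ∀ i, ∫ x, f i x ∂m = 1) (hν0 : ν 0 = 0) (hνsum : ∑ i, ν i = 1)
    (π : Fin (M + 1) → ℝ) : ∫ x, Dtot p ν f π x ∂m = ∑ i, π i := by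
  simp only [Dtot, Dcoef_eq_predictedPrior_mul]
  rw [integral_finsetSum _ fun i _ => (hf i).const_mul _]
  simp only [integral_const_mul, hf1, mul_one]
  exact sum_predictedPrior hν0 hνsum π

lemma concaveOn_perspective_Dcoef (hp0 : 0 ≤ p) (hp1 : p ≤ 1) (hν : ∀ i ≠ 0, 0 ≤ ν i)
    (hf : ∀ i x, 0 ≤ f i x) {g : (Fin (M + 1) → ℝ) → ℝ}
    (hg : ConcaveOn ℝ (stdSimplex ℝ (Fin (M + 1))) g) (x : E) :
    ConcaveOn ℝ (stdSimplex ℝ (Fin (M + 1))) fun π => perspective g (Dcoef p ν f π x) :=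
  (hg.perspective.comp_linearMap (DcoefLin p ν f x)).subset
    (fun _ hπ => Dcoef_nonneg hp0 hp1 hν hf hπ.1 x) (convex_stdSimplex ℝ _)

lemma integrable_perspective_Dcoef [MeasurableSpace E] {m : Measure E} (hp0 : 0 ≤ p)
    (hp1 : p ≤ 1) (hν : ∀ i ≠ 0, 0 ≤ ν i) (hfmeas : ∀ i, Measurable (f i))
    (hf : ∀ i x, 0 ≤ f i x) (hfint : ∀ i, Integrable (f i) m) {g : (Fin (M + 1) → ℝ) → ℝ}
    (hgmeas : Measurable g) {C : ℝ} (hC : ∀ v ∈ stdSimplex ℝ (Fin (M + 1)), |g v| ≤ C)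
    {π : Fin (M + 1) → ℝ} (hπ : 0 ≤ π) :
    Integrable (fun x => perspective g (Dcoef p ν f π x)) m := by
  have hmeas : Measurable fun x => Dcoef p ν f π x := by
    simp only [Dcoef_eq_predictedPrior_mul]
    fun_prop
  refine Integrable.mono' ((integrable_Dtot (p := p) (ν := ν) hfint π).const_mul C)
    (hgmeas.perspective.comp hmeas).aestronglyMeasurable (ae_of_all _ fun x => ?_)
  exact abs_perspective_le hC (Dcoef_nonneg hp0 hp1 hν hf hπ x)

end Dcoef

theorem Top_preserves_bounded_concave
    {E : Type*} [MeasurableSpace E] (m : Measure E)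
    {M : ℕ} (p : ℝ) (hp : p ∈ Set.Ioo (0 : ℝ) 1)
    (ν : Fin (M + 1) → ℝ) (hν0 : ν 0 = 0) (hνpos : ∀ i : Fin (M + 1), i ≠ 0 → 0 < ν i)
    (hνsum : ∑ i : Fin (M + 1), ν i = 1)
    (f : Fin (M + 1) → E → ℝ) (hfmeas : ∀ i, Measurable (f i))
    (hfnonneg : ∀ i x, 0 ≤ f i x)
    (hfint : ∀ i, ∫⁻ x, ENNReal.ofReal (f i x) ∂m = 1)
    (g : (Fin (M + 1) → ℝ) → ℝ) (hgmeas : Measurable g)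
    (hgbdd : ∃ C : ℝ, ∀ π ∈ stdSimplex ℝ (Fin (M + 1)), |g π| ≤ C)
    (hgconc : ConcaveOn ℝ (stdSimplex ℝ (Fin (M + 1))) g) :
    ConcaveOn ℝ (stdSimplex ℝ (Fin (M + 1))) (Toper m p ν f g) ∧
      ∃ C : ℝ, ∀ π ∈ stdSimplex ℝ (Fin (M + 1)), |Toper m p ν f g π| ≤ C := by
  obtain ⟨C, hC⟩ := hgbdd
  have hp0 := hp.1.le
  have hp1 := hp.2.le
  have hν : ∀ i ≠ 0, 0 ≤ ν i := fun i hi => (hνpos i hi).le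
  have hf : ∀ i, Integrable (f i) m := fun i =>
    (lintegral_ofReal_ne_top_iff_integrable (hfmeas i).aestronglyMeasurable
      (ae_of_all _ (hfnonneg i))).1 (by simp [hfint i])
  have hf1 : ∀ i, ∫ x, f i x ∂m = 1 := fun i => by
    rw [integral_eq_lintegral_of_nonneg_ae (ae_of_all _ (hfnonneg i))
      (hfmeas i).aestronglyMeasurable, hfint i, ENNReal.toReal_one]
  have hint : ∀ π ∈ stdSimplex ℝ (Fin (M + 1)),
      Integrable (fun x => perspective g (Dcoef p ν f π x)) m := fun π hπ =>
    integrable_perspective_Dcoef hp0 hp1 hν hfmeas hfnonneg hf hgmeas hC hπ.1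
  refine ⟨concaveOn_integral (convex_stdSimplex ℝ _)
    (ae_of_all _ (concaveOn_perspective_Dcoef hp0 hp1 hν hfnonneg hgconc)) hint, C,
    fun π hπ => ?_⟩
  calc |Toper m p ν f g π| ≤ ∫ x, C * Dtot p ν f π x ∂m :=
        abs_integral_le_integral_abs.trans <| integral_mono (hint π hπ).abs
          ((integrable_Dtot hf π).const_mul C)
          fun x => abs_perspective_le hC (Dcoef_nonneg hp0 hp1 hν hfnonneg hπ.1 x)
    _ = C := by rw [integral_const_mul, integral_Dtot hf hf1 hν0 hνsum, hπ.2, mul_one]
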